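/- Let G be a DDMOG of order n ≥ 5 with DDM labeling g, and let 1 ≤ ℓ ≤ n/2. Let H be the disjoint union of ℓ directed 4-cycles with i-th cycle v_{i1}→v_{i2}→v_{i3}→v_{i4}→v_{i1}, labeled h(v_{i1}) = n+i, h(v_{i2}) = n+ℓ+i, h(v_{i3}) = n+2ℓ+i, h(v_{i4}) = n+3ℓ+i. Then every vertex of H has weight ±2ℓ under h, and Σ_{v: wt_h(v)=2ℓ} h(v) = Σ_{v: wt_h(v)=-2ℓ} h(v); consequently the weighted sum of G with H (joining the vertex of G labeled 2ℓ appropriately to the vertices of H) is a DDMOG on n + 4ℓ vertices. -/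

import Mathlib

open Classical Finset

/-- The weight of vertex `v` under labeling `f` in the digraph with edge relation `E`:
sum of labels of in-neighbors minus sum of labels of out-neighbors. -/
noncomputable def wt {V : Type*} [Fintype V] (E : V → V → Prop) (f : V → ℤ) (v : V) : ℤ :=
  (∑ u, if E u v then f u else 0) - (∑ u, if E v u then f u else 0)

/-- The imbalance of vertex `v`: in-degree minus out-degree. -/
noncomputable def imb {V : Type*} [Fintype V] (E : V → V → Prop) (v : V) : ℤ :=
  (∑ u, if E u v then (1 : ℤ) else 0) - (∑ u, if E v u then (1 : ℤ) else 0)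

/-- The disjoint union of `l` directed 4-cycles: in the `i`-th cycle,
`(i, j) → (i, j + 1)` for `j : Fin 4`. -/
def cyc4E (l : ℕ) (a b : Fin l × Fin 4) : Prop := a.1 = b.1 ∧ b.2 = a.2 + 1

/-- The labeling of the `l` copies of `C₄`: `h (v_{i,j}) = n + j·l + (i + 1)`. -/
def cyc4h (n l : ℕ) (a : Fin l × Fin 4) : ℤ := n + (a.2 : ℤ) * l + ((a.1 : ℤ) + 1)

/-
Within each 4-cycle of `H` the label of `v_{i,j}` is `n + j·ℓ + i + 1`, so the weight of a vertex,
the label of its predecessor minus that of its successor, is `+2ℓ` at `j = 0, 3` and `-2ℓ` at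
`j = 1, 2`; moreover both pairs of labels have the same sum `2n + 3ℓ + 2i + 2`. In the weighted
sum, a vertex `a` of `G` gains `Σ_{wt_h = g a} h - Σ_{wt_h = -g a} h`, which vanishes by this
balance, while a vertex `x` of `H` of weight `±2ℓ` is joined to the unique vertex of `G` labelled
`2ℓ`, which exactly cancels its weight. The labels `g` and `h` fill `[1, n]` and `[n + 1, n + 4ℓ]`.
-/

lemma Set.BijOn.sumElim_univ {α β γ : Type*} {f : α → γ} {g : β → γ} {s t : Set γ}
    (hf : Set.BijOn f Set.univ s) (hg : Set.BijOn g Set.univ t) (hst : Disjoint s t) :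
    Set.BijOn (Sum.elim f g) Set.univ (s ∪ t) := by
  refine ⟨?_, ?_, ?_⟩
  · rintro (a | b) -
    exacts [Or.inl (hf.mapsTo trivial), Or.inr (hg.mapsTo trivial)]
  · rintro (a | b) - (a' | b') - hab
    · exact congrArg _ (hf.injOn trivial trivial hab)
    · exact (hst.ne_of_mem (hf.mapsTo trivial) (hg.mapsTo trivial) hab).elim
    · exact (hst.ne_of_mem (hf.mapsTo trivial) (hg.mapsTo trivial) hab.symm).elim
    · exact congrArg _ (hg.injOn trivial trivial hab)
  · rintro y (hy | hy)
    · obtain ⟨a, -, rfl⟩ := hf.surjOn hy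
      exact ⟨.inl a, trivial, rfl⟩
    · obtain ⟨b, -, rfl⟩ := hg.surjOn hy
      exact ⟨.inr b, trivial, rfl⟩

lemma bijOn_sumElim_Icc {V W : Type*} {g : V → ℤ} {h : W → ℤ} {n m : ℤ}
    (hg : Set.BijOn g Set.univ (Set.Icc 1 n)) (hh : Set.BijOn h Set.univ (Set.Icc (n + 1) (n + m)))
    (hn : 0 ≤ n) (hm : 0 ≤ m) :
    Set.BijOn (Sum.elim g h) Set.univ (Set.Icc 1 (n + m)) := by
  have hdisj : Disjoint (Set.Icc 1 n) (Set.Icc (n + 1) (n + m)) :=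
    Set.disjoint_left.2 fun t h₁ h₂ => by simp only [Set.mem_Icc] at h₁ h₂; omega
  convert hg.sumElim_univ hh hdisj using 1
  ext t
  simp only [Set.mem_union, Set.mem_Icc]
  omega

lemma bijOn_add_finVal (a : ℤ) (m : ℕ) :
    Set.BijOn (fun k : Fin m => a + 1 + (k : ℕ)) Set.univ (Set.Icc (a + 1) (a + m)) := by
  refine ⟨fun k _ => ?_, fun k _ k' _ h => ?_, fun t ht => ?_⟩
  · have := k.isLt
    simp only [Set.mem_Icc]
    omega
  · simp only at h
    exact Fin.ext (by omega)
  · simp only [Set.mem_Icc] at ht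
    exact ⟨⟨(t - a - 1).toNat, by omega⟩, trivial, by simp only; omega⟩

lemma sum_filter_eq_apply_of_injective {V : Type*} [Fintype V] {g : V → ℤ}
    (hg : Function.Injective g) (a₀ : V) :
    ∑ a ∈ univ.filter (fun a => g a₀ = g a), g a = g a₀ := by
  rw [sum_filter]
  simp [hg.eq_iff]

lemma sum_filter_eq_eq_zero_of_nonpos {V : Type*} [Fintype V] {g : V → ℤ}
    (hg : ∀ a, 0 < g a) {c : ℤ} (hc : c ≤ 0) :
    ∑ a ∈ univ.filter (fun a => c = g a), g a = 0 :=
  sum_eq_zero fun a ha => absurd (hg a) (by rw [(mem_filter.1 ha).2.symm]; omega)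

structure IsWeightedSum {V W : Type*} [Fintype W] (EG : V → V → Prop) (EH : W → W → Prop)
    (g : V → ℤ) (h : W → ℤ) (EK : V ⊕ W → V ⊕ W → Prop) : Prop where
  inl_inl : ∀ a b, EK (.inl a) (.inl b) ↔ EG a b
  inr_inr : ∀ x y, EK (.inr x) (.inr y) ↔ EH x y
  inl_inr : ∀ a x, EK (.inl a) (.inr x) ↔ wt EH h x = -(g a)
  inr_inl : ∀ a x, EK (.inr x) (.inl a) ↔ wt EH h x = g a

namespace IsWeightedSum

variable {V W : Type*} [Fintype V] [Fintype W] {EG : V → V → Prop} {EH : W → W → Prop}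
  {g : V → ℤ} {h : W → ℤ} {EK : V ⊕ W → V ⊕ W → Prop}

lemma wt_inl (hK : IsWeightedSum EG EH g h EK) (a : V) :
    wt EK (Sum.elim g h) (.inl a) = wt EG g a
      + ∑ x ∈ univ.filter (fun x => wt EH h x = g a), h x
      - ∑ x ∈ univ.filter (fun x => wt EH h x = -(g a)), h x := by
  rw [wt.eq_1 EK, wt.eq_1 EG, Fintype.sum_sum_type, Fintype.sum_sum_type, sum_filter, sum_filter]
  simp only [Sum.elim_inl, Sum.elim_inr, hK.inl_inl, hK.inr_inl, hK.inl_inr]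
  ring

lemma wt_inr (hK : IsWeightedSum EG EH g h EK) (x : W) :
    wt EK (Sum.elim g h) (.inr x) = wt EH h x
      + ∑ a ∈ univ.filter (fun a => wt EH h x = -(g a)), g a
      - ∑ a ∈ univ.filter (fun a => wt EH h x = g a), g a := by
  rw [wt.eq_1 EK, Fintype.sum_sum_type, Fintype.sum_sum_type, sum_filter, sum_filter]
  simp only [Sum.elim_inl, Sum.elim_inr, hK.inr_inr, hK.inr_inl, hK.inl_inr]
  rw [wt.eq_1 EH]
  ring

theorem wt_eq_zero (hK : IsWeightedSum EG EH g h EK) (hgwt : ∀ a, wt EG g a = 0)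
    (hg : Function.Injective g) (hgpos : ∀ a, 0 < g a)
    (hlabel : ∀ x, ∃ a, wt EH h x = g a ∨ wt EH h x = -(g a))
    (hbal : ∀ c, ∑ x ∈ univ.filter (fun x => wt EH h x = c), h x =
      ∑ x ∈ univ.filter (fun x => wt EH h x = -c), h x) :
    ∀ v, wt EK (Sum.elim g h) v = 0 := by
  rintro (a | x)
  · rw [hK.wt_inl, hgwt, hbal]
    ring
  · obtain ⟨a₀, h₀ | h₀⟩ := hlabel x <;> rw [hK.wt_inr, h₀]
    · simp only [← neg_eq_iff_eq_neg]
      rw [sum_filter_eq_eq_zero_of_nonpos hgpos (neg_nonpos.2 (hgpos a₀).le),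
        sum_filter_eq_apply_of_injective hg]
      ring
    · simp only [neg_inj]
      rw [sum_filter_eq_eq_zero_of_nonpos hgpos (neg_nonpos.2 (hgpos a₀).le),
        sum_filter_eq_apply_of_injective hg]
      ring

end IsWeightedSum

lemma wt_cyc4E {l : ℕ} (f : Fin l × Fin 4 → ℤ) (x : Fin l × Fin 4) :
    wt (cyc4E l) f x = f (x.1, x.2 - 1) - f (x.1, x.2 + 1) := by
  have hin : ∀ u, cyc4E l u x ↔ u = (x.1, x.2 - 1) := by
    rintro ⟨i, j⟩
    simp only [cyc4E, Prod.ext_iff, eq_sub_iff_add_eq, eq_comm]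
  have hout : ∀ u, cyc4E l x u ↔ u = (x.1, x.2 + 1) := by
    rintro ⟨i, j⟩
    simp only [cyc4E, Prod.ext_iff, eq_comm]
  simp only [wt, hin, hout, sum_ite_eq', mem_univ, if_true]

lemma wt_cyc4E_cyc4h (n l : ℕ) (i : Fin l) (j : Fin 4) :
    wt (cyc4E l) (cyc4h n l) (i, j) = if j = 0 ∨ j = 3 then (2 * l : ℤ) else -(2 * l) := by
  rw [wt_cyc4E]
  fin_cases j <;> simp [cyc4h] <;> ring

lemma wt_cyc4E_cyc4h_eq_or_eq_neg (n l : ℕ) (x : Fin l × Fin 4) :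
    wt (cyc4E l) (cyc4h n l) x = 2 * l ∨ wt (cyc4E l) (cyc4h n l) x = -(2 * l) := by
  rw [wt_cyc4E_cyc4h]
  split_ifs
  exacts [Or.inl rfl, Or.inr rfl]

lemma cyc4h_zero_add_cyc4h_three (n l : ℕ) (i : Fin l) :
    cyc4h n l (i, 0) + cyc4h n l (i, 3) = cyc4h n l (i, 1) + cyc4h n l (i, 2) := by
  simp only [cyc4h, Fin.isValue, Fin.coe_ofNat_eq_mod, Nat.zero_mod, CharP.cast_eq_zero, zero_mul,
    add_zero, Nat.mod_succ, Nat.cast_ofNat, Nat.one_mod, Nat.cast_one, one_mul, Nat.reduceMod]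
  ring

lemma sum_cyc4h_filter_wt_eq_neg (n l : ℕ) (c : ℤ) :
    ∑ x ∈ univ.filter (fun x => wt (cyc4E l) (cyc4h n l) x = c), cyc4h n l x =
      ∑ x ∈ univ.filter (fun x => wt (cyc4E l) (cyc4h n l) x = -c), cyc4h n l x := by
  simp only [sum_filter, Fintype.sum_prod_type, Fin.sum_univ_four, wt_cyc4E_cyc4h]
  refine sum_congr rfl fun i _ => ?_
  have := cyc4h_zero_add_cyc4h_three n l i
  simp only [Fin.isValue, Fin.reduceEq, or_false, ↓reduceIte, one_ne_zero, or_self, or_true, neg_inj]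
  split_ifs <;> omega

lemma bijOn_cyc4h (n l : ℕ) :
    Set.BijOn (cyc4h n l) Set.univ (Set.Icc ((n : ℤ) + 1) (n + 4 * l)) := by
  have hcomp : cyc4h n l =
      (fun k : Fin (4 * l) => (n : ℤ) + 1 + (k : ℕ)) ∘ finProdFinEquiv ∘ Prod.swap := by
    funext x
    simp only [Function.comp_apply, cyc4h, Prod.fst_swap, Prod.snd_swap, finProdFinEquiv_apply_val]
    push_cast
    ring
  have hfin := bijOn_add_finVal n (4 * l)
  push_cast at hfin
  rw [hcomp]
  exact hfin.comp (finProdFinEquiv.bijective.comp Prod.swap_bijective).bijOn_univ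

theorem attach_ornaments_DDM_general {V : Type*} [Fintype V]
    (EG : V → V → Prop)
    (g : V → ℤ)
    (hgbij : Set.BijOn g Set.univ (Set.Icc 1 (Fintype.card V : ℤ)))
    (hgwt : ∀ v, wt EG g v = 0)
    (l : ℕ) (hln : 2 * l ≤ Fintype.card V)
    (EK : (V ⊕ (Fin l × Fin 4)) → (V ⊕ (Fin l × Fin 4)) → Prop)
    (hKGG : ∀ a b : V, EK (Sum.inl a) (Sum.inl b) ↔ EG a b)
    (hKHH : ∀ x y : Fin l × Fin 4, EK (Sum.inr x) (Sum.inr y) ↔ cyc4E l x y)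
    (hKGH : ∀ (a : V) (x : Fin l × Fin 4),
      EK (Sum.inl a) (Sum.inr x) ↔ wt (cyc4E l) (cyc4h (Fintype.card V) l) x = -(g a))
    (hKHG : ∀ (a : V) (x : Fin l × Fin 4),
      EK (Sum.inr x) (Sum.inl a) ↔ wt (cyc4E l) (cyc4h (Fintype.card V) l) x = g a) :
    (∀ x : Fin l × Fin 4,
      wt (cyc4E l) (cyc4h (Fintype.card V) l) x = 2 * l ∨
        wt (cyc4E l) (cyc4h (Fintype.card V) l) x = -(2 * l)) ∧
    ((∑ x ∈ Finset.univ.filter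
        (fun x => wt (cyc4E l) (cyc4h (Fintype.card V) l) x = 2 * l),
        cyc4h (Fintype.card V) l x) =
      ∑ x ∈ Finset.univ.filter
        (fun x => wt (cyc4E l) (cyc4h (Fintype.card V) l) x = -(2 * l)),
        cyc4h (Fintype.card V) l x) ∧
    ∃ f : (V ⊕ (Fin l × Fin 4)) → ℤ,
      Set.BijOn f Set.univ (Set.Icc 1 ((Fintype.card V : ℤ) + 4 * l)) ∧
        ∀ v, wt EK f v = 0 := by
  set n := Fintype.card V
  refine ⟨wt_cyc4E_cyc4h_eq_or_eq_neg n l, sum_cyc4h_filter_wt_eq_neg n l _, Sum.elim g (cyc4h n l),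
    bijOn_sumElim_Icc hgbij (bijOn_cyc4h n l) (by omega) (by omega),
    IsWeightedSum.wt_eq_zero ⟨hKGG, hKHH, hKGH, hKHG⟩ hgwt (Set.injOn_univ.1 hgbij.injOn)
      (fun a => zero_lt_one.trans_le (hgbij.mapsTo trivial).1) (fun x => ?_)
      (sum_cyc4h_filter_wt_eq_neg n l)⟩
  have hl_pos : 0 < l := x.1.pos
  obtain ⟨a, -, ha⟩ := hgbij.surjOn (show (2 * l : ℤ) ∈ Set.Icc 1 (n : ℤ) by
    simp only [Set.mem_Icc]
    omega)
  exact ⟨a, by rw [ha]; exact wt_cyc4E_cyc4h_eq_or_eq_neg n l x⟩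

theorem attach_ornaments_DDM {V : Type*} [Fintype V]
    (EG : V → V → Prop)
    (horG : ∀ u v, EG u v → ¬ EG v u)
    (hn5 : 5 ≤ Fintype.card V)
    (g : V → ℤ)
    (hgbij : Set.BijOn g Set.univ (Set.Icc 1 (Fintype.card V : ℤ)))
    (hgwt : ∀ v, wt EG g v = 0)
    (l : ℕ) (hl : 1 ≤ l) (hln : 2 * l ≤ Fintype.card V)
    (EK : (V ⊕ (Fin l × Fin 4)) → (V ⊕ (Fin l × Fin 4)) → Prop)
    (hKGG : ∀ a b : V, EK (Sum.inl a) (Sum.inl b) ↔ EG a b)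
    (hKHH : ∀ x y : Fin l × Fin 4, EK (Sum.inr x) (Sum.inr y) ↔ cyc4E l x y)
    (hKGH : ∀ (a : V) (x : Fin l × Fin 4),
      EK (Sum.inl a) (Sum.inr x) ↔ wt (cyc4E l) (cyc4h (Fintype.card V) l) x = -(g a))
    (hKHG : ∀ (a : V) (x : Fin l × Fin 4),
      EK (Sum.inr x) (Sum.inl a) ↔ wt (cyc4E l) (cyc4h (Fintype.card V) l) x = g a) :
    (∀ x : Fin l × Fin 4,
      wt (cyc4E l) (cyc4h (Fintype.card V) l) x = 2 * l ∨
        wt (cyc4E l) (cyc4h (Fintype.card V) l) x = -(2 * l)) ∧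
    ((∑ x ∈ Finset.univ.filter
        (fun x => wt (cyc4E l) (cyc4h (Fintype.card V) l) x = 2 * l),
        cyc4h (Fintype.card V) l x) =
      ∑ x ∈ Finset.univ.filter
        (fun x => wt (cyc4E l) (cyc4h (Fintype.card V) l) x = -(2 * l)),
        cyc4h (Fintype.card V) l x) ∧
    ∃ f : (V ⊕ (Fin l × Fin 4)) → ℤ,
      Set.BijOn f Set.univ (Set.Icc 1 ((Fintype.card V : ℤ) + 4 * l)) ∧
        ∀ v, wt EK f v = 0 :=
  attach_ornaments_DDM_general EG g hgbij hgwt l hln EK hKGG hKHH hKGH hKHG
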